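/- arXiv:1805.05641 — 2 statements merged into one kernel-verified Lean document; each statement's English description precedes it below -/
import Mathlib

section
/- Let 1 ≤ k < n, κ_1 < … < κ_n real, c_1, …, c_n real, A a totally nonnegative real k×n matrix of rank k, and let w_1(x), …, w_k(x) be the Darboux coefficients. For v ∈ ℝ^n set h_v(x) = Σ_{j=1}^n v_j e^{κ_j x + c_j} and Ψ_v(x) = h_v^{(k)}(x) − Σ_{s=1}^k w_s(x) h_v^{(k−s)}(x). Then for every x ∈ ℝ, τ(x)·Ψ_v(x) = Σ_J Δ_J(Â_v) · Π_{j_1<j_2, j_1,j_2∈J} (κ_{j_2} − κ_{j_1}) · e^{Σ_{j∈J} (κ_j x + c_j)}, where the sum is over all (k+1)-element subsets J of {1,…,n} and Â_v is the (k+1)×n matrix obtained from A by appending v as last row. In particular, τ·Ψ_v is a finite linear combination of real exponentials in x. -/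
/-!
Let `E(x)` be the `n × (k+1)` matrix with entries `κ_j^l e^{κ_j x + c_j}`. Row `i` of `Â_v E(x)`
is the jet `(g, g', …, g^{(k)})(x)` of the `i`-th row function, `g = f_i` for `i ≤ k` and
`g = h_v` for the last row. Subtracting `w_s(x)` times column `k - s` from the last column (columns
numbered from `0`) clears it, by the Darboux relation, except in the last row, where `Ψ_v(x)`
appears; hence `det (Â_v E(x)) = τ(x) Ψ_v(x)`. Cauchy–Binet expands the same determinant as
`Σ_J Δ_J(Â_v) Δ_J(E(x)ᵀ)`, and `Δ_J(E(x)ᵀ)` is the Vandermonde determinant of `(κ_j)_{j ∈ J}`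
times `Π_{j ∈ J} e^{κ_j x + c_j}`.
-/
open scoped BigOperators

/-- The `m × m` maximal minor of a real `m × n` matrix `A` on the set of columns `I`
(defined to be `0` when `I` does not have exactly `m` elements). -/
noncomputable def maxMinor {m n : ℕ} (A : Matrix (Fin m) (Fin n) ℝ)
    (I : Finset (Fin n)) : ℝ :=
  if h : I.card = m then
    (A.submatrix id fun j => ((I.orderIsoOfFin h) j : Fin n)).det
  else 0

/-- The Vandermonde-type product `Π_{j₁ < j₂, j₁,j₂ ∈ J} (κ j₂ - κ j₁)`. -/
noncomputable def vandProd {n : ℕ} (κ : Fin n → ℝ) (J : Finset (Fin n)) : ℝ :=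
  ∏ p ∈ (J ×ˢ J).filter fun p => p.1 < p.2, (κ p.2 - κ p.1)

open Finset Matrix

theorem Finset.prod_orderEmbOfFin {α M : Type*} [LinearOrder α] [CommMonoid M] {s : Finset α}
    {m : ℕ} (h : s.card = m) (g : α → M) : ∏ r, g (s.orderEmbOfFin h r) = ∏ a ∈ s, g a := by
  rw [← prod_coe_sort s]
  exact (s.orderIsoOfFin h).toEquiv.prod_comp (fun a : s => g a)

theorem sum_apply_sub_one_sub_eq_sum_rev {M : Type*} [AddCommMonoid M] {k : ℕ}
    (F : Fin k → ℕ → M) : ∑ s : Fin k, F s (k - 1 - s) = ∑ l : Fin k, F (Fin.rev l) l := by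
  rw [← Equiv.sum_comp Fin.revPerm]
  refine sum_congr rfl fun l _ => ?_
  simp only [Fin.revPerm_apply, Fin.val_rev]
  congr 1
  omega

theorem maxMinor_eq_det_submatrix {m n : ℕ} (B : Matrix (Fin m) (Fin n) ℝ) {J : Finset (Fin n)}
    (hJ : J.card = m) : maxMinor B J = (B.submatrix id (J.orderEmbOfFin hJ)).det := by
  rw [maxMinor, dif_pos hJ]
  rfl

section CauchyBinet

variable {m n : ℕ}

theorem det_mul_eq_sum_prod_mul_det_submatrix {R : Type*} [CommRing R]
    (B : Matrix (Fin m) (Fin n) R) (N : Matrix (Fin n) (Fin m) R) :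
    det (B * N) = ∑ φ : Fin m → Fin n, (∏ i, B i (φ i)) * det (N.submatrix φ id) := by
  let D : (Fin m → R) [⋀^Fin m]→ₗ[R] R := detRowAlternating
  have hrows : det (B * N) = D fun i => ∑ j, B i j • N j := by
    congr 1
    ext i l
    simp [mul_apply]
  have hexpand := D.toMultilinearMap.map_sum fun i (j : Fin n) => B i j • N j
  rw [AlternatingMap.coe_multilinearMap] at hexpand
  rw [hrows, hexpand]
  refine sum_congr rfl fun φ _ => ?_
  exact D.toMultilinearMap.map_smul_univ (fun i => B i (φ i)) (fun i => N (φ i))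

theorem sum_filter_image_eq_sum_perm {M : Type*} [AddCommMonoid M] {J : Finset (Fin n)}
    (hJ : J.card = m) (F : (Fin m → Fin n) → M) :
    ∑ φ : Fin m → Fin n with univ.image φ = J, F φ =
      ∑ σ : Equiv.Perm (Fin m), F fun i => J.orderEmbOfFin hJ (σ i) := by
  set e := J.orderEmbOfFin hJ
  refine (sum_bij (fun σ _ i => e (σ i)) (fun σ _ => ?_) (fun σ _ τ _ h => ?_) (fun φ hφ => ?_)
    fun _ _ => rfl).symm
  · simp only [mem_filter, mem_univ, true_and, ← coe_inj, coe_image, coe_univ, Set.image_univ]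
    exact (σ.surjective.range_comp e).trans (range_orderEmbOfFin J hJ)
  · exact Equiv.ext fun i => e.injective (congrFun h i)
  · have hmem : ∀ i, φ i ∈ J := fun i => (mem_filter.mp hφ).2 ▸ mem_image_of_mem φ (mem_univ i)
    let ψ : Fin m → Fin m := fun i => (J.orderIsoOfFin hJ).symm ⟨φ i, hmem i⟩
    have hψ : ∀ i, e (ψ i) = φ i := fun i =>
      congrArg Subtype.val ((J.orderIsoOfFin hJ).apply_symm_apply ⟨φ i, hmem i⟩)
    have hsurj : Function.Surjective ψ := fun r => by
      have hr : e r ∈ univ.image φ := by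
        rw [(mem_filter.mp hφ).2]
        exact J.orderEmbOfFin_mem hJ r
      obtain ⟨i, -, hi⟩ := mem_image.mp hr
      exact ⟨i, e.injective ((hψ i).trans hi)⟩
    exact ⟨Equiv.ofBijective ψ (Finite.surjective_iff_bijective.mp hsurj), mem_univ _, funext hψ⟩

theorem sum_perm_prod_mul_det_submatrix {J : Finset (Fin n)} (hJ : J.card = m)
    (B : Matrix (Fin m) (Fin n) ℝ) (N : Matrix (Fin n) (Fin m) ℝ) :
    ∑ σ : Equiv.Perm (Fin m),
        (∏ i, B i (J.orderEmbOfFin hJ (σ i))) *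
          det (N.submatrix (fun i => J.orderEmbOfFin hJ (σ i)) id) =
      maxMinor B J * maxMinor Nᵀ J := by
  set e := J.orderEmbOfFin hJ
  have hperm : ∀ σ : Equiv.Perm (Fin m),
      det (N.submatrix (fun i => e (σ i)) id) = σ.sign * det (N.submatrix e id) := fun σ => by
    rw [← det_permute]
    rfl
  rw [maxMinor_eq_det_submatrix _ hJ, maxMinor_eq_det_submatrix _ hJ, ← transpose_submatrix,
    det_transpose, ← det_transpose (B.submatrix id e), det_apply', sum_mul]
  refine sum_congr rfl fun σ _ => ?_
  rw [hperm]
  simp only [transpose_apply, submatrix_apply, id]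
  ring

theorem det_mul_eq_sum_maxMinor_mul (B : Matrix (Fin m) (Fin n) ℝ)
    (N : Matrix (Fin n) (Fin m) ℝ) :
    det (B * N) = ∑ J ∈ powersetCard m univ, maxMinor B J * maxMinor Nᵀ J := by
  classical
  set F : (Fin m → Fin n) → ℝ := fun φ => (∏ i, B i (φ i)) * det (N.submatrix φ id)
  have hF : ∀ φ, univ.image φ ∉ powersetCard m univ → F φ = 0 := fun φ hφ => by
    have hninj : ¬ Function.Injective φ := fun hinj =>
      hφ (mem_powersetCard.mpr ⟨subset_univ _, by simp [card_image_of_injective _ hinj]⟩)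
    simp only [Function.Injective, not_forall] at hninj
    obtain ⟨i, i', hii', hne⟩ := hninj
    have hrow : N.submatrix φ id i = N.submatrix φ id i' := funext fun l => by simp [hii']
    simp [F, det_zero_of_row_eq hne hrow]
  calc det (B * N) = ∑ φ, F φ := det_mul_eq_sum_prod_mul_det_submatrix B N
    _ = ∑ φ with univ.image φ ∈ powersetCard m univ, F φ :=
      (sum_filter_of_ne fun φ _ h => not_not.mp (mt (hF φ) h)).symm
    _ = ∑ J ∈ powersetCard m univ, ∑ φ with univ.image φ = J, F φ :=
      (sum_fiberwise_eq_sum_filter _ _ _ _).symm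
    _ = _ := sum_congr rfl fun J hJ => by
      rw [sum_filter_image_eq_sum_perm (mem_powersetCard.mp hJ).2,
        ← sum_perm_prod_mul_det_submatrix (mem_powersetCard.mp hJ).2]

end CauchyBinet

theorem det_eq_mul_det_of_col_eq_sum {R : Type*} [CommRing R] {m : ℕ}
    (M : Matrix (Fin (m + 1)) (Fin (m + 1)) R) (u : Fin m → R)
    (hu : ∀ i : Fin m, M i.castSucc (Fin.last m) = ∑ l, u l * M i.castSucc l.castSucc) :
    det M = (M (Fin.last m) (Fin.last m) - ∑ l, u l * M (Fin.last m) l.castSucc) *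
      det (M.submatrix Fin.castSucc Fin.castSucc) := by
  let a : Fin (m + 1) → R := Fin.lastCases 1 fun l => -u l
  let col : Fin (m + 1) → R := fun i => M i (Fin.last m) - ∑ l, u l * M i l.castSucc
  have hcol : (fun i => ∑ j, a j • M i j) = col := funext fun i => by
    simp [a, col, Fin.sum_univ_castSucc, sub_eq_add_neg, add_comm]
  have hdet : det (M.updateCol (Fin.last m) col) = det M := by
    rw [← hcol, det_updateCol_sum]
    simp [a]
  rw [← hdet, det_succ_column _ (Fin.last m), Fin.sum_univ_castSucc, sum_eq_zero fun i _ => ?_]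
  · have hminor : (M.updateCol (Fin.last m) col).submatrix Fin.castSucc Fin.castSucc =
        M.submatrix Fin.castSucc Fin.castSucc := by
      ext i j
      simp
    simp [col, Fin.succAbove_last, hminor, Even.neg_one_pow ⟨m, rfl⟩]
  · simp [col, hu]

theorem det_eq_dressed_mul_wronskian {k : ℕ} (g : Fin k → ℝ → ℝ) (h : ℝ → ℝ) (w : Fin k → ℝ)
    (x : ℝ) (M : Matrix (Fin (k + 1)) (Fin (k + 1)) ℝ)
    (hMg : ∀ (i : Fin k) (l : Fin (k + 1)), M i.castSucc l = iteratedDeriv l (g i) x)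
    (hMh : ∀ l : Fin (k + 1), M (Fin.last k) l = iteratedDeriv l h x)
    (hw : ∀ i, iteratedDeriv k (g i) x = ∑ s : Fin k, w s * iteratedDeriv (k - 1 - s) (g i) x) :
    det M = (iteratedDeriv k h x - ∑ s : Fin k, w s * iteratedDeriv (k - 1 - s) h x) *
      det (of fun i l : Fin k => iteratedDeriv l (g i) x) := by
  have hminor : M.submatrix Fin.castSucc Fin.castSucc =
      of fun i l : Fin k => iteratedDeriv l (g i) x := by
    ext i l
    simp [hMg]
  rw [det_eq_mul_det_of_col_eq_sum M fun l => w (Fin.rev l), hminor,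
    sum_apply_sub_one_sub_eq_sum_rev fun s j => w s * iteratedDeriv j h x]
  · simp only [hMh, Fin.val_last, Fin.val_castSucc]
  · intro i
    rw [hMg, Fin.val_last, hw,
      sum_apply_sub_one_sub_eq_sum_rev fun s j => w s * iteratedDeriv j (g i) x]
    simp only [hMg, Fin.val_castSucc]

noncomputable def expSum {n : ℕ} (κ c a : Fin n → ℝ) (t : ℝ) : ℝ :=
  ∑ j, a j * Real.exp (κ j * t + c j)

section ExpSum

variable {n : ℕ} (κ c : Fin n → ℝ)

theorem hasDerivAt_expSum (a : Fin n → ℝ) (t : ℝ) :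
    HasDerivAt (expSum κ c a) (expSum κ c (a * κ) t) t := by
  unfold expSum
  refine HasDerivAt.fun_sum fun j _ => ?_
  refine ((((hasDerivAt_id' t).const_mul (κ j)).add_const (c j)).exp.const_mul (a j)).congr_deriv
    ?_
  simp only [Pi.mul_apply]
  ring

theorem iteratedDeriv_expSum (a : Fin n → ℝ) (l : ℕ) :
    iteratedDeriv l (expSum κ c a) = expSum κ c (a * κ ^ l) := by
  induction l with
  | zero => simp
  | succ l ih =>
    ext t
    rw [iteratedDeriv_succ, ih, (hasDerivAt_expSum κ c _ t).deriv, pow_succ, mul_assoc]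

end ExpSum

theorem vandProd_eq_prod_orderEmbOfFin {m n : ℕ} (κ : Fin n → ℝ) {J : Finset (Fin n)}
    (hJ : J.card = m) :
    vandProd κ J = ∏ r : Fin m, ∏ s ∈ Ioi r,
      (κ (J.orderEmbOfFin hJ s) - κ (J.orderEmbOfFin hJ r)) := by
  rw [vandProd, prod_filter, prod_product, ← prod_orderEmbOfFin hJ]
  refine prod_congr rfl fun r _ => ?_
  rw [← prod_orderEmbOfFin hJ, ← filter_lt_eq_Ioi, prod_filter]
  simp only [(J.orderEmbOfFin hJ).lt_iff_lt]

noncomputable def expVandermonde {n : ℕ} (m : ℕ) (κ c : Fin n → ℝ) (x : ℝ) :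
    Matrix (Fin n) (Fin m) ℝ :=
  of fun j l => κ j ^ (l : ℕ) * Real.exp (κ j * x + c j)

theorem mul_expVandermonde_apply {k n m : ℕ} (κ c : Fin n → ℝ) (x : ℝ)
    (B : Matrix (Fin k) (Fin n) ℝ) (i : Fin k) (l : Fin m) :
    (B * expVandermonde m κ c x) i l = iteratedDeriv l (expSum κ c (B i)) x := by
  simp only [iteratedDeriv_expSum, expSum, expVandermonde, mul_apply, of_apply, Pi.mul_apply,
    Pi.pow_apply, mul_assoc]

theorem maxMinor_transpose_expVandermonde {m n : ℕ} (κ c : Fin n → ℝ) (x : ℝ)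
    {J : Finset (Fin n)} (hJ : J.card = m) :
    maxMinor (expVandermonde m κ c x)ᵀ J =
      vandProd κ J * Real.exp (∑ j ∈ J, (κ j * x + c j)) := by
  set e := J.orderEmbOfFin hJ
  have hfactor : (expVandermonde m κ c x)ᵀ.submatrix id e =
      of fun l r => Real.exp (κ (e r) * x + c (e r)) * (vandermonde (κ ∘ e))ᵀ l r := by
    ext l r
    simp [expVandermonde, vandermonde, mul_comm]
  rw [maxMinor_eq_det_submatrix _ hJ, hfactor, det_mul_row, det_transpose, det_vandermonde,
    vandProd_eq_prod_orderEmbOfFin κ hJ, Real.exp_sum, ← prod_orderEmbOfFin hJ, mul_comm]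
  rfl

theorem tau_mul_dressed_eq_sum_minors_general
    (k n : ℕ)
    (κ c : Fin n → ℝ)
    (A : Matrix (Fin k) (Fin n) ℝ)
    (f : Fin k → ℝ → ℝ)
    (hf : ∀ i x, f i x = ∑ j, A i j * Real.exp (κ j * x + c j))
    (τ : ℝ → ℝ)
    (hτ : ∀ x, τ x =
      Matrix.det (Matrix.of fun i l : Fin k => iteratedDeriv (l : ℕ) (f i) x))
    (w : Fin k → ℝ → ℝ)
    (hw : ∀ x i, iteratedDeriv k (f i) x =
      ∑ s : Fin k, w s x * iteratedDeriv (k - 1 - (s : ℕ)) (f i) x)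
    (v : Fin n → ℝ) (h Ψ : ℝ → ℝ)
    (hh : ∀ x, h x = ∑ j, v j * Real.exp (κ j * x + c j))
    (hΨ : ∀ x, Ψ x = iteratedDeriv k h x -
      ∑ s : Fin k, w s x * iteratedDeriv (k - 1 - (s : ℕ)) h x)
    (Ahat : Matrix (Fin (k + 1)) (Fin n) ℝ)
    (hAhat : Ahat = Matrix.of (Fin.snoc (fun i : Fin k => A i) v))
    (x : ℝ) :
    τ x * Ψ x =
      ∑ J ∈ Finset.powersetCard (k + 1) (Finset.univ : Finset (Fin n)),
        maxMinor Ahat J * vandProd κ J * Real.exp (∑ j ∈ J, (κ j * x + c j)) := by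
  generalize hM : Ahat * expVandermonde (k + 1) κ c x = M
  have hrowA : ∀ i, Ahat i.castSucc = A i := fun i => by
    rw [hAhat]
    exact Fin.snoc_castSucc (α := fun _ => Fin n → ℝ) ..
  have hrowv : Ahat (Fin.last k) = v := by
    rw [hAhat]
    exact Fin.snoc_last (α := fun _ => Fin n → ℝ) ..
  have hMf : ∀ (i : Fin k) (l : Fin (k + 1)), M i.castSucc l = iteratedDeriv l (f i) x := by
    intro i l
    rw [← hM, mul_expVandermonde_apply, hrowA, funext (hf i)]
    rfl
  have hMh : ∀ l : Fin (k + 1), M (Fin.last k) l = iteratedDeriv l h x := by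
    intro l
    rw [← hM, mul_expVandermonde_apply, hrowv, funext hh]
    rfl
  have hdetM : det M = Ψ x * τ x := by
    rw [hΨ, hτ]
    exact det_eq_dressed_mul_wronskian f h (fun s => w s x) x M hMf hMh (fun i => hw x i)
  rw [mul_comm, ← hdetM, ← hM, det_mul_eq_sum_maxMinor_mul]
  refine sum_congr rfl fun J hJ => ?_
  rw [maxMinor_transpose_expVandermonde κ c x (mem_powersetCard.mp hJ).2, mul_assoc]

/-- for TNN soliton data with Darboux coefficients `w`, the dressed
wave function `Ψ_v` of any vector `v ∈ ℝⁿ` satisfies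
`τ(x)·Ψ_v(x) = Σ_J Δ_J(Â_v) · Π_{j₁<j₂∈J}(κ_{j₂}-κ_{j₁}) · e^{Σ_{j∈J}(κ_j x + c_j)}`,
the sum running over all `(k+1)`-element subsets `J` of the columns, where `Â_v` is
`A` with the row `v` appended. -/
theorem tau_mul_dressed_eq_sum_minors
    (k n : ℕ) (hk : 1 ≤ k) (hkn : k < n)
    (κ c : Fin n → ℝ) (hκ : StrictMono κ)
    (A : Matrix (Fin k) (Fin n) ℝ) (hrank : A.rank = k)
    (hTNN : ∀ I : Finset (Fin n), I.card = k → 0 ≤ maxMinor A I)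
    (f : Fin k → ℝ → ℝ)
    (hf : ∀ i x, f i x = ∑ j, A i j * Real.exp (κ j * x + c j))
    (τ : ℝ → ℝ)
    (hτ : ∀ x, τ x =
      Matrix.det (Matrix.of fun i l : Fin k => iteratedDeriv (l : ℕ) (f i) x))
    (w : Fin k → ℝ → ℝ)
    (hw : ∀ x i, iteratedDeriv k (f i) x =
      ∑ s : Fin k, w s x * iteratedDeriv (k - 1 - (s : ℕ)) (f i) x)
    (v : Fin n → ℝ) (h Ψ : ℝ → ℝ)
    (hh : ∀ x, h x = ∑ j, v j * Real.exp (κ j * x + c j))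
    (hΨ : ∀ x, Ψ x = iteratedDeriv k h x -
      ∑ s : Fin k, w s x * iteratedDeriv (k - 1 - (s : ℕ)) h x)
    (Ahat : Matrix (Fin (k + 1)) (Fin n) ℝ)
    (hAhat : Ahat = Matrix.of (Fin.snoc (fun i : Fin k => A i) v))
    (x : ℝ) :
    τ x * Ψ x =
      ∑ J ∈ Finset.powersetCard (k + 1) (Finset.univ : Finset (Fin n)),
        maxMinor Ahat J * vandProd κ J * Real.exp (∑ j ∈ J, (κ j * x + c j)) :=
  tau_mul_dressed_eq_sum_minors_general k n κ c A f hf τ hτ w hw v h Ψ hh hΨ Ahat hAhat x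
end

section
/- Let A be a real k×n matrix in reduced row echelon form with pivot columns i_1 < … < i_k (so A_{m, i_m} = 1, A_{m', i_m} = 0 for m' ≠ m, and A_{m,j} = 0 for j < i_m). Fix r ∈ {1,…,k} and assume row r of A is the standard unit vector e_{i_r} (A_{r,j} = 0 for all j ≠ i_r). Define the (k−1)×(n−1) matrix A' by deleting row r and column i_r from A and multiplying by −1 every remaining entry A_{m,j} with m < r and j > i_r. Then for every (k−1)-element subset J' of {1,…,n}∖{i_r}, Δ_{J'}(A') = Δ_{J'∪{i_r}}(A) (columns of A' being identified with the columns of A other than i_r). Consequently, if A is totally nonnegative of rank k, then A' is totally nonnegative of rank k−1. -/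
/-!
Column `i_r` of `A` is the unit vector `e_r`, so expanding a maximal minor of `A` through that
column along it gives `(-1) ^ (r + q)` times the minor with row `r` and column `i_r` removed,
`q` being the position of `i_r` among the chosen columns. Flipping the signs of the rows below `r`
and of the columns right of `i_r` multiplies that minor by `(-1) ^ (r + q)` as well, and agrees
with the sign pattern of `A'` except below row `r` and left of `i_r`, where `A` vanishes by the
echelon form. The rank of `A'` is `k - 1` because its columns at the remaining pivots form a
diagonal `±1` matrix.
-/

open scoped BigOperators

open Matrix Finset

theorem Finset.orderEmbOfFin_image {α β : Type*} [LinearOrder α] [LinearOrder β]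
    {f : α → β} (hf : StrictMono f) {s : Finset α} {k : ℕ} (hs : s.card = k)
    (h : (s.image f).card = k) :
    ⇑((s.image f).orderEmbOfFin h) = f ∘ s.orderEmbOfFin hs :=
  (orderEmbOfFin_unique h (fun j => mem_image_of_mem f (orderEmbOfFin_mem s hs j))
    (hf.comp (s.orderEmbOfFin hs).strictMono)).symm

theorem Finset.exists_orderEmbOfFin_insert {α : Type*} [LinearOrder α] {a : α} {t : Finset α}
    {k : ℕ} (ht : t.card = k) (h : (insert a t).card = k + 1) :
    ∃ q : Fin (k + 1), (insert a t).orderEmbOfFin h q = a ∧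
      ∀ j, (insert a t).orderEmbOfFin h (q.succAbove j) = t.orderEmbOfFin ht j := by
  set f := (insert a t).orderEmbOfFin h
  obtain ⟨q, hq⟩ : a ∈ Set.range f := by
    rw [range_orderEmbOfFin]
    exact mem_insert_self a t
  refine ⟨q, hq, congrFun (orderEmbOfFin_unique ht (fun j => ?_)
    (f.strictMono.comp (Fin.strictMono_succAbove q)))⟩
  have hne : f (q.succAbove j) ≠ a := hq ▸ f.injective.ne (Fin.succAbove_ne q j)
  exact (mem_insert.1 (orderEmbOfFin_mem _ h _)).resolve_left hne

theorem Fin.card_insert_image_succAbove {n : ℕ} (p : Fin (n + 1)) (J : Finset (Fin n)) :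
    (insert p (J.image p.succAbove)).card = J.card + 1 := by
  rw [card_insert_of_notMem (by simp [Fin.succAbove_ne]),
    card_image_of_injective _ Fin.succAbove_right_injective]

theorem Fin.prod_ite_lt_succAbove {R : Type*} [CommMonoid R] {k : ℕ} (r : Fin (k + 1)) (a : R) :
    ∏ i : Fin k, (if r < r.succAbove i then a else 1) = a ^ (k - r : ℕ) := by
  have h := Fin.prod_univ_succAbove (fun m : Fin (k + 1) => if r < m then a else 1) r
  rw [if_neg (lt_irrefl r), one_mul, prod_ite, prod_const_one, mul_one, Finset.prod_const,
    filter_lt_eq_Ioi, Fin.card_Ioi] at h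
  rw [← h, Nat.add_sub_cancel]

namespace Matrix

variable {R : Type*} [CommRing R]

theorem det_eq_of_col_eq_ite {k : ℕ} (B : Matrix (Fin (k + 1)) (Fin (k + 1)) R)
    (r q : Fin (k + 1)) (hB : ∀ i, B i q = if i = r then 1 else 0) :
    B.det = (-1) ^ (r + q : ℕ) * (B.submatrix r.succAbove q.succAbove).det := by
  rw [det_succ_column B q, sum_eq_single r (fun i _ hi => by simp [hB, hi]) (by simp), hB,
    if_pos rfl, mul_one]

/-- Once the lower-left block vanishes, the sign flip is conjugation by two diagonal sign
matrices. -/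
theorem det_flipSigns_of_lowerLeft_eq_zero {k : ℕ} (M : Matrix (Fin k) (Fin k) R)
    (r q : Fin (k + 1))
    (hM : ∀ i j, r < r.succAbove i → q.succAbove j < q → M i j = 0) :
    (of fun i j => (if r.succAbove i < r ∧ q < q.succAbove j then -1 else 1) * M i j).det =
      (-1) ^ (r + q : ℕ) * M.det := by
  have hconj : (of fun i j => (if r.succAbove i < r ∧ q < q.succAbove j then -1 else 1) * M i j) =
      diagonal (fun i => if r < r.succAbove i then -1 else 1) * M *
        diagonal (fun j => if q < q.succAbove j then -1 else 1) := by
    ext i j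
    simp only [of_apply, mul_diagonal, diagonal_mul]
    rcases (Fin.succAbove_ne r i).lt_or_gt with hi | hi <;>
      rcases (Fin.succAbove_ne q j).lt_or_gt with hj | hj
    · simp [hi, hi.not_gt, hj.not_gt]
    · simp [hi, hi.not_gt]
    · simp [hM i j hi hj]
    · simp [hi, hj, hi.not_gt]
  have hr := r.is_le
  have hq := q.is_le
  have hsign : (-1 : R) ^ (k - r : ℕ) * (-1) ^ (k - q : ℕ) = (-1) ^ (r + q : ℕ) := by
    rw [← pow_add]
    exact neg_one_pow_congr (by simp only [Nat.even_iff]; omega)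
  rw [hconj, det_mul, det_mul, det_diagonal, det_diagonal, Fin.prod_ite_lt_succAbove,
    Fin.prod_ite_lt_succAbove, ← hsign]
  ring

theorem rank_eq_of_det_submatrix_ne_zero {K : Type*} [Field K] {m n : Type*} [Fintype m]
    [Fintype n] [DecidableEq m] (A : Matrix m n K) (c : m → n)
    (h : (A.submatrix id c).det ≠ 0) :
    A.rank = Fintype.card m := by
  refine le_antisymm A.rank_le_card_height ?_
  calc Fintype.card m = (A.submatrix id c).rank :=
        (rank_of_isUnit _ ((isUnit_iff_isUnit_det _).2 (isUnit_iff_ne_zero.2 h))).symm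
    _ ≤ A.rank := rank_submatrix_le A id c

end Matrix

/-- The matrix `A'` of the statement, for the pivot `p = i_r`. -/
def pivotDeletion {R : Type*} [Ring R] {k n : ℕ} (A : Matrix (Fin (k + 1)) (Fin (n + 1)) R)
    (r : Fin (k + 1)) (p : Fin (n + 1)) : Matrix (Fin k) (Fin n) R :=
  of fun m j => (if r.succAbove m < r ∧ p < p.succAbove j then -1 else 1) *
    A (r.succAbove m) (p.succAbove j)

theorem maxMinor_pivotDeletion {k n : ℕ} (A : Matrix (Fin (k + 1)) (Fin (n + 1)) ℝ)
    (r : Fin (k + 1)) (p : Fin (n + 1)) (hcol : ∀ i, A i p = if i = r then 1 else 0)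
    (hzero : ∀ i j, r < i → j < p → A i j = 0) (J : Finset (Fin n)) (hJ : J.card = k) :
    maxMinor (pivotDeletion A r p) J = maxMinor A (insert p (J.image p.succAbove)) := by
  have hI : (insert p (J.image p.succAbove)).card = k + 1 := by
    rw [Fin.card_insert_image_succAbove, hJ]
  rw [maxMinor, maxMinor, dif_pos hJ, dif_pos hI]
  simp only [coe_orderIsoOfFin_apply]
  obtain ⟨q, hq, hf⟩ := exists_orderEmbOfFin_insert
    (by rwa [card_image_of_injective _ Fin.succAbove_right_injective]) hI
  simp only [orderEmbOfFin_image (Fin.strictMono_succAbove p) hJ, Function.comp_apply] at hf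
  set f := (insert p (J.image p.succAbove)).orderEmbOfFin hI
  set g := J.orderEmbOfFin hJ
  have hlt_iff : ∀ j, q < q.succAbove j ↔ p < p.succAbove (g j) := fun j => by
    rw [← f.lt_iff_lt, hq, hf]
  set M := A.submatrix r.succAbove (fun j => p.succAbove (g j))
  have hdel : (pivotDeletion A r p).submatrix id g =
      of fun i j => (if r.succAbove i < r ∧ q < q.succAbove j then -1 else 1) * M i j := by
    ext i j
    simp [pivotDeletion, M, hlt_iff]
  have hM : ∀ i j, r < r.succAbove i → q.succAbove j < q → M i j = 0 := fun i j hi hj =>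
    hzero _ _ hi (by simpa [hq, hf] using f.lt_iff_lt.2 hj)
  rw [hdel, det_flipSigns_of_lowerLeft_eq_zero M r q hM,
    det_eq_of_col_eq_ite _ r q (by simpa [hq] using hcol)]
  congr 2
  ext i j
  simp [M, hf]

theorem rank_pivotDeletion {K : Type*} [Field K] {k n : ℕ}
    (A : Matrix (Fin (k + 1)) (Fin (n + 1)) K) (piv : Fin (k + 1) → Fin (n + 1))
    (hpiv : Function.Injective piv) (hpivot1 : ∀ m, A m (piv m) = 1)
    (hpivot0 : ∀ m m', m' ≠ m → A m' (piv m) = 0) (r : Fin (k + 1)) :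
    (pivotDeletion A r (piv r)).rank = k := by
  have hne : ∀ m, piv (r.succAbove m) ≠ piv r := fun m => hpiv.ne (Fin.succAbove_ne r m)
  choose c hc using fun m => Fin.exists_succAbove_eq (hne m)
  have hdiag : (pivotDeletion A r (piv r)).submatrix id c = diagonal fun m =>
      if r.succAbove m < r ∧ piv r < piv (r.succAbove m) then -1 else 1 := by
    ext m m'
    rcases eq_or_ne m m' with rfl | hmm'
    · simp [pivotDeletion, hc, hpivot1]
    · simp [pivotDeletion, hc, hmm',
        hpivot0 _ _ (Fin.succAbove_right_injective.ne hmm')]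
  refine (rank_eq_of_det_submatrix_ne_zero _ c ?_).trans (Fintype.card_fin k)
  rw [hdiag, det_diagonal]
  exact prod_ne_zero_iff.2 fun m _ => by split_ifs <;> norm_num

theorem rref_delete_pivot_row_minors_general
    (k n : ℕ)
    (A : Matrix (Fin (k + 1)) (Fin (n + 1)) ℝ)
    (piv : Fin (k + 1) → Fin (n + 1)) (hpiv : StrictMono piv)
    (hpivot1 : ∀ m, A m (piv m) = 1)
    (hpivot0 : ∀ m m', m' ≠ m → A m' (piv m) = 0)
    (hlt : ∀ m j, j < piv m → A m j = 0)
    (r : Fin (k + 1))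
    (A' : Matrix (Fin k) (Fin n) ℝ)
    (hA' : ∀ m j, A' m j =
      (if r.succAbove m < r ∧ piv r < (piv r).succAbove j then (-1 : ℝ) else 1) *
        A (r.succAbove m) ((piv r).succAbove j)) :
    (∀ J' : Finset (Fin n), J'.card = k →
        maxMinor A' J' =
          maxMinor A (insert (piv r) (J'.image ((piv r).succAbove)))) ∧
    ((A.rank = k + 1 ∧
        ∀ I : Finset (Fin (n + 1)), I.card = k + 1 → 0 ≤ maxMinor A I) →
      (A'.rank = k ∧
        ∀ J : Finset (Fin n), J.card = k → 0 ≤ maxMinor A' J)) := by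
  have hA'eq : A' = pivotDeletion A r (piv r) := ext hA'
  subst hA'eq
  have hcol : ∀ i, A i (piv r) = if i = r then 1 else 0 := fun i => by
    split_ifs with h
    · exact h ▸ hpivot1 r
    · exact hpivot0 r i h
  have hminor := maxMinor_pivotDeletion A r (piv r) hcol
    fun i j hi hj => hlt i j (hj.trans (hpiv hi))
  refine ⟨hminor, fun ⟨_, hTNN⟩ =>
    ⟨rank_pivotDeletion A piv hpiv.injective hpivot1 hpivot0 r, fun J hJ => ?_⟩⟩
  rw [hminor J hJ]
  exact hTNN _ (by rw [Fin.card_insert_image_succAbove, hJ])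

/-- let `A` be a `(k+1)×(n+1)` matrix in reduced row echelon form with
pivot columns `piv 0 < … < piv k`, and suppose row `r` of `A` is the standard unit
vector `e_{piv r}`.  Let `A'` be obtained by deleting row `r` and column `piv r`
(rows of `A'` indexed via `r.succAbove`, columns via `(piv r).succAbove`) and
changing the sign of every remaining entry lying strictly above row `r` and strictly
to the right of column `piv r`.  Then every maximal minor of `A'` on a column set
`J'` equals the maximal minor of `A` on `J' ∪ {piv r}` (columns identified via
`(piv r).succAbove`); consequently, if `A` is totally nonnegative of rank `k+1`,
then `A'` is totally nonnegative of rank `k`. -/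
theorem rref_delete_pivot_row_minors
    (k n : ℕ)
    (A : Matrix (Fin (k + 1)) (Fin (n + 1)) ℝ)
    (piv : Fin (k + 1) → Fin (n + 1)) (hpiv : StrictMono piv)
    (hpivot1 : ∀ m, A m (piv m) = 1)
    (hpivot0 : ∀ m m', m' ≠ m → A m' (piv m) = 0)
    (hlt : ∀ m j, j < piv m → A m j = 0)
    (r : Fin (k + 1))
    (hrow : ∀ j, j ≠ piv r → A r j = 0)
    (A' : Matrix (Fin k) (Fin n) ℝ)
    (hA' : ∀ m j, A' m j =
      (if r.succAbove m < r ∧ piv r < (piv r).succAbove j then (-1 : ℝ) else 1) *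
        A (r.succAbove m) ((piv r).succAbove j)) :
    (∀ J' : Finset (Fin n), J'.card = k →
        maxMinor A' J' =
          maxMinor A (insert (piv r) (J'.image ((piv r).succAbove)))) ∧
    ((A.rank = k + 1 ∧
        ∀ I : Finset (Fin (n + 1)), I.card = k + 1 → 0 ≤ maxMinor A I) →
      (A'.rank = k ∧
        ∀ J : Finset (Fin n), J.card = k → 0 ≤ maxMinor A' J)) :=
  rref_delete_pivot_row_minors_general k n A piv hpiv hpivot1 hpivot0 hlt r A' hA'
end
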